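/- arXiv:1303.6831 — 3 statements merged into one kernel-verified Lean document; each statement's English description precedes it below -/
import Mathlib

section
/- For the discrete-time quantum walk with coin U^S(α,β,γ) and initial state |Ψ₀⟩ = (1/√2)|0⟩(|↓⟩ + i|↑⟩), the quantity P_R − P_L after t steps has the form M(β,t)·sin(α+γ), where M(β,t) depends only on β and t (not on α and γ individually). -/
open Complex

/-- One step of the discrete-time quantum walk `W = S (I ⊗ U)` on amplitudes
`ψ : ℤ → Fin 2 → ℂ`, where `ψ x 0` is the `|↑⟩` (right-moving) amplitude at site `x`
and `ψ x 1` the `|↓⟩` (left-moving) one: first the coin `U` acts, then the shift. -/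
noncomputable def qwStep (U : Matrix (Fin 2) (Fin 2) ℂ) (ψ : ℤ → Fin 2 → ℂ) :
    ℤ → Fin 2 → ℂ :=
  fun x c => if c = 0 then U.mulVec (ψ (x - 1)) 0 else U.mulVec (ψ (x + 1)) 1

/-- The probability of finding the walker at site `x`. -/
noncomputable def prob (ψ : ℤ → Fin 2 → ℂ) (x : ℤ) : ℝ := ∑ c : Fin 2, ‖ψ x c‖ ^ 2

/-- Total probability strictly to the right of the origin. -/
noncomputable def PR (ψ : ℤ → Fin 2 → ℂ) : ℝ := ∑' x : {x : ℤ // 0 < x}, prob ψ x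

/-- Total probability strictly to the left of the origin. -/
noncomputable def PL (ψ : ℤ → Fin 2 → ℂ) : ℝ := ∑' x : {x : ℤ // x < 0}, prob ψ x

/-- The initial state `(1/√2)|0⟩(|↓⟩ + i|↑⟩)`. -/
noncomputable def ψinit : ℤ → Fin 2 → ℂ :=
  fun x => if x = 0 then ![I / Real.sqrt 2, 1 / Real.sqrt 2] else 0

/-- The SU(2) coin `U^S(α,β,γ)`. -/
noncomputable def USU (α β γ : ℝ) : Matrix (Fin 2) (Fin 2) ℂ :=
  !![exp ((α : ℂ) * I) * (Real.cos β : ℂ), -exp (-(γ : ℂ) * I) * (Real.sin β : ℂ);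
     exp ((γ : ℂ) * I) * (Real.sin β : ℂ), exp (-(α : ℂ) * I) * (Real.cos β : ℂ)]

/-!
The phases of the coin are a gauge: the transformation `ψ x c ↦ e^{iαx} e^{i(α+γ)c} ψ x c`
intertwines the walk with coin `U^S(α,β,γ)` and the walk with the real rotation coin `R(β)`, and
it preserves probabilities. It carries `ψinit` to `p F₀ + q J F₀`, where `F₀ = |0⟩|↑⟩`, `J` is the
parity `ψ x ↦ (-ψ (-x) ↓, ψ (-x) ↑)`, `p = i/√2` and `q = e^{-i(α+γ)}/√2`. The rotation walk
commutes with `J`, so after `t` steps the state is `p F + q J F`, `F` the rotation walk from `F₀`.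
Since `|p| = |q|`, only the interference term survives in `P(x) - P(-x)`; it is
`4 Re(p q̄) Re Σ_c F x c · conj (J F x c)`, and `Re(p q̄) = -sin(α+γ)/2`.
-/

open Function Matrix ComplexConjugate

lemma qwStep_apply_zero (U : Matrix (Fin 2) (Fin 2) ℂ) (ψ : ℤ → Fin 2 → ℂ) (x : ℤ) :
    qwStep U ψ x 0 = U 0 0 * ψ (x - 1) 0 + U 0 1 * ψ (x - 1) 1 := by
  simp [qwStep, mulVec, dotProduct, Fin.sum_univ_two]

lemma qwStep_apply_one (U : Matrix (Fin 2) (Fin 2) ℂ) (ψ : ℤ → Fin 2 → ℂ) (x : ℤ) :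
    qwStep U ψ x 1 = U 1 0 * ψ (x + 1) 0 + U 1 1 * ψ (x + 1) 1 := by
  simp [qwStep, mulVec, dotProduct, Fin.sum_univ_two]

noncomputable def qwStepLinear (U : Matrix (Fin 2) (Fin 2) ℂ) :
    Module.End ℂ (ℤ → Fin 2 → ℂ) where
  toFun := qwStep U
  map_add' ψ φ := by
    funext x c
    by_cases hc : c = 0 <;> simp [qwStep, hc, mulVec_add]
  map_smul' a ψ := by
    funext x c
    by_cases hc : c = 0 <;> simp [qwStep, hc, mulVec_smul]

lemma iterate_qwStep_smul_add_smul (U : Matrix (Fin 2) (Fin 2) ℂ) (t : ℕ) (p q : ℂ)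
    (ψ φ : ℤ → Fin 2 → ℂ) :
    (qwStep U)^[t] (p • ψ + q • φ) = p • (qwStep U)^[t] ψ + q • (qwStep U)^[t] φ := by
  have h : (qwStep U)^[t] = ⇑(qwStepLinear U ^ t) := (Module.End.coe_pow (qwStepLinear U) t).symm
  simp only [h, map_add, map_smul]

lemma iterate_qwStep_eq_zero_of_lt_abs (U : Matrix (Fin 2) (Fin 2) ℂ) {ψ : ℤ → Fin 2 → ℂ} {n : ℤ}
    (hψ : ∀ x, n < |x| → ψ x = 0) (t : ℕ) :
    ∀ x, n + t < |x| → (qwStep U)^[t] ψ x = 0 := by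
  induction t with
  | zero => simpa using hψ
  | succ t ih =>
    intro x hx
    have hleft : (qwStep U)^[t] ψ (x - 1) = 0 :=
      ih _ (by cases abs_cases x <;> cases abs_cases (x - 1) <;> omega)
    have hright : (qwStep U)^[t] ψ (x + 1) = 0 :=
      ih _ (by cases abs_cases x <;> cases abs_cases (x + 1) <;> omega)
    funext c
    rw [iterate_succ_apply']
    fin_cases c <;> simp [qwStep_apply_zero, qwStep_apply_one, hleft, hright]

noncomputable def gaugeTransform (z : ℂ) (μ : Fin 2 → ℂ) (ψ : ℤ → Fin 2 → ℂ) :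
    ℤ → Fin 2 → ℂ :=
  fun x c => z ^ x * μ c * ψ x c

lemma semiconj_gaugeTransform_qwStep {U V : Matrix (Fin 2) (Fin 2) ℂ} {z : ℂ} (hz : z ≠ 0)
    {μ : Fin 2 → ℂ} (h : U * diagonal μ = diagonal ![z * μ 0, z⁻¹ * μ 1] * V) :
    Semiconj (gaugeTransform z μ) (qwStep V) (qwStep U) := by
  intro ψ
  have hU0 : ∀ j, U 0 j * μ j = z * μ 0 * V 0 j := fun j => by
    simpa [mul_diagonal, diagonal_mul] using congrFun (congrFun h 0) j
  have hU1 : ∀ j, U 1 j * μ j = z⁻¹ * μ 1 * V 1 j := fun j => by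
    simpa [mul_diagonal, diagonal_mul] using congrFun (congrFun h 1) j
  funext x c
  fin_cases c
  · simp only [Fin.zero_eta, qwStep_apply_zero, gaugeTransform, zpow_sub_one₀ hz]
    linear_combination -(z ^ x * μ 0 * (V 0 0 * ψ (x - 1) 0 + V 0 1 * ψ (x - 1) 1)) *
      mul_inv_cancel₀ hz - (z ^ x * z⁻¹ * ψ (x - 1) 0) * hU0 0 - (z ^ x * z⁻¹ * ψ (x - 1) 1) * hU0 1
  · simp only [Fin.mk_one, qwStep_apply_one, gaugeTransform, zpow_add_one₀ hz]
    linear_combination -(z ^ x * μ 1 * (V 1 0 * ψ (x + 1) 0 + V 1 1 * ψ (x + 1) 1)) *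
      mul_inv_cancel₀ hz - (z ^ x * z * ψ (x + 1) 0) * hU1 0 - (z ^ x * z * ψ (x + 1) 1) * hU1 1

lemma prob_gaugeTransform {z : ℂ} (hz : ‖z‖ = 1) {μ : Fin 2 → ℂ} (hμ : ∀ c, ‖μ c‖ = 1)
    (ψ : ℤ → Fin 2 → ℂ) : prob (gaugeTransform z μ ψ) = prob ψ := by
  funext x
  simp [prob, gaugeTransform, hz, hμ]

def parity (ψ : ℤ → Fin 2 → ℂ) : ℤ → Fin 2 → ℂ := fun x => ![-ψ (-x) 1, ψ (-x) 0]

lemma commute_parity_qwStep (a b : ℂ) : Function.Commute parity (qwStep !![a, -b; b, a]) := by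
  intro ψ
  funext x c
  fin_cases c <;>
    simp only [Fin.zero_eta, Fin.mk_one, Fin.isValue, parity, qwStep_apply_zero, qwStep_apply_one,
      of_apply, cons_val', cons_val_zero, cons_val_one, cons_val_fin_one] <;>
    ring_nf

lemma prob_sub_prob_neg_of_norm_eq (F : ℤ → Fin 2 → ℂ) {p q : ℂ} (hpq : ‖p‖ = ‖q‖) (x : ℤ) :
    prob (p • F + q • parity F) x - prob (p • F + q • parity F) (-x) =
      4 * (p * conj q).re * (∑ c, F x c * conj (parity F x c)).re := by
  have hpq' : normSq p = normSq q := by rw [← Complex.sq_norm, ← Complex.sq_norm, hpq]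
  simp only [prob, Fin.sum_univ_two, parity, Pi.add_apply, Pi.smul_apply, smul_eq_mul, neg_neg,
    cons_val_zero, cons_val_one, Complex.sq_norm]
  linear_combination (norm := skip)
    (normSq (F x 0) + normSq (F x 1) - normSq (F (-x) 0) - normSq (F (-x) 1)) * hpq'
  simp only [normSq_apply, add_re, add_im, mul_re, mul_im, neg_re, neg_im, conj_re, conj_im]
  ring

lemma summable_prob_of_eq_zero_of_lt_abs {ψ : ℤ → Fin 2 → ℂ} {n : ℤ}
    (hψ : ∀ x, n < |x| → ψ x = 0) : Summable (prob ψ) := by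
  refine summable_of_ne_finset_zero (s := Finset.Icc (-n) n) fun x hx => ?_
  rw [Finset.mem_Icc] at hx
  simp [prob, hψ x (by cases abs_cases x <;> omega)]

lemma PR_sub_PL_eq_tsum {ψ : ℤ → Fin 2 → ℂ} (hψ : Summable (prob ψ)) :
    PR ψ - PL ψ = ∑' x : {x : ℤ // 0 < x}, (prob ψ x - prob ψ (-x)) := by
  have hneg : PL ψ = ∑' x : {x : ℤ // 0 < x}, prob ψ (-x) :=
    (((Equiv.neg ℤ).subtypeEquiv fun x => neg_neg_iff_pos.symm).tsum_eq
      (fun x : {x : ℤ // x < 0} => prob ψ x)).symm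
  rw [PR, hneg]
  exact ((hψ.subtype _).tsum_sub ((hψ.comp_injective neg_injective).subtype _)).symm

noncomputable def rotCoin (β : ℝ) : Matrix (Fin 2) (Fin 2) ℂ :=
  !![(Real.cos β : ℂ), -(Real.sin β : ℂ); (Real.sin β : ℂ), (Real.cos β : ℂ)]

lemma USU_mul_diagonal (α β γ : ℝ) :
    USU α β γ * diagonal ![1, exp (((α + γ : ℝ) : ℂ) * I)] =
      diagonal ![exp ((α : ℂ) * I) * 1, (exp ((α : ℂ) * I))⁻¹ * exp (((α + γ : ℝ) : ℂ) * I)] *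
        rotCoin β := by
  ext i j
  fin_cases i <;> fin_cases j <;> simp [USU, rotCoin, add_mul, exp_add, exp_neg] <;> field_simp

noncomputable def spinUpAtOrigin : ℤ → Fin 2 → ℂ := Pi.single 0 ![1, 0]

lemma ψinit_eq_gaugeTransform (z : ℂ) (θ : ℝ) :
    ψinit = gaugeTransform z ![1, exp ((θ : ℂ) * I)]
      ((I / Real.sqrt 2) • spinUpAtOrigin +
        (exp (-(θ : ℂ) * I) / Real.sqrt 2) • parity spinUpAtOrigin) := by
  funext x c
  by_cases hx : x = 0
  · subst hx
    fin_cases c <;> simp [ψinit, gaugeTransform, parity, spinUpAtOrigin, exp_neg, mul_div_assoc']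
  · fin_cases c <;> simp [ψinit, gaugeTransform, parity, spinUpAtOrigin, hx]

lemma iterate_qwStep_USU_ψinit (α β γ : ℝ) (t : ℕ) :
    (qwStep (USU α β γ))^[t] ψinit =
      gaugeTransform (exp ((α : ℂ) * I)) ![1, exp (((α + γ : ℝ) : ℂ) * I)]
        ((I / Real.sqrt 2) • (qwStep (rotCoin β))^[t] spinUpAtOrigin +
          (exp (-((α + γ : ℝ) : ℂ) * I) / Real.sqrt 2) •
            parity ((qwStep (rotCoin β))^[t] spinUpAtOrigin)) := by
  have hgauge :=
    (semiconj_gaugeTransform_qwStep (exp_ne_zero _) (USU_mul_diagonal α β γ)).iterate_right t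
  have hparity : Function.Commute parity (qwStep (rotCoin β)) := commute_parity_qwStep _ _
  rw [ψinit_eq_gaugeTransform (exp ((α : ℂ) * I)) (α + γ), ← hgauge,
    iterate_qwStep_smul_add_smul, ← hparity.iterate_right t]

theorem PR_sub_PL_eq_M_sin :
    ∃ M : ℝ → ℕ → ℝ, ∀ (α β γ : ℝ) (t : ℕ),
      PR ((qwStep (USU α β γ))^[t] ψinit) - PL ((qwStep (USU α β γ))^[t] ψinit) =
        M β t * Real.sin (α + γ) := by
  set F : ℝ → ℕ → ℤ → Fin 2 → ℂ := fun β t => (qwStep (rotCoin β))^[t] spinUpAtOrigin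
  refine ⟨fun β t => -2 * ∑' x : {x : ℤ // 0 < x}, (∑ c, F β t x c * conj (parity (F β t) x c)).re,
    fun α β γ t => ?_⟩
  have hsupp := iterate_qwStep_eq_zero_of_lt_abs (USU α β γ) (ψ := ψinit) (n := 0)
    (fun x hx => by simp [ψinit, abs_pos.1 hx]) t
  have hnorm : ‖I / Real.sqrt 2‖ = ‖exp (-((α + γ : ℝ) : ℂ) * I) / Real.sqrt 2‖ := by
    simp [Complex.norm_exp]
  have hcoeff (θ : ℝ) : (I / Real.sqrt 2 * conj (exp (-(θ : ℂ) * I) / Real.sqrt 2)).re =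
      -Real.sin θ / 2 := by
    rw [map_div₀, ← exp_conj, conj_ofReal, div_mul_div_comm, ← ofReal_mul,
      Real.mul_self_sqrt zero_le_two]
    simp [exp_ofReal_mul_I_re, mul_re]
  rw [PR_sub_PL_eq_tsum (summable_prob_of_eq_zero_of_lt_abs hsupp), iterate_qwStep_USU_ψinit,
    prob_gaugeTransform (norm_exp_ofReal_mul_I _)
      (Fin.forall_fin_two.2 ⟨norm_one, norm_exp_ofReal_mul_I _⟩)]
  simp_rw [prob_sub_prob_neg_of_norm_eq _ hnorm, hcoeff, tsum_mul_left]
  ring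
end

section
/- For the discrete-time quantum walk with coin U^S(α,β,γ) and initial state (1/√2)|0⟩(|↓⟩ + i|↑⟩), if α + γ ≡ 0 (mod π) then P_R − P_L = 0 after every number of steps t. -/
open Complex

/-! When `α + γ ∈ πℤ` the walk has a symmetry `F`: reflect `x ↦ -x`, swap the two coin states
(with a sign) and multiply by the phase `e^{2iαx}`. Moving one site rescales the phase by
`e^{2iα}`, which matches the diagonal entries of the coin, and `e^{2i(α+γ)} = 1` matches the
off-diagonal ones, so `F` commutes with `W`. Moreover `F ψ₀ = -i ψ₀` and `F` exchanges the
probabilities to the right and to the left of the origin, hence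
`P_L = P_R(F W^t ψ₀) = P_R(W^t F ψ₀) = P_R(-i W^t ψ₀) = P_R`. -/

noncomputable def reflect (ω : ℂ) (ψ : ℤ → Fin 2 → ℂ) : ℤ → Fin 2 → ℂ :=
  fun x => ![ω ^ x * ψ (-x) 1, -(ω ^ x * ψ (-x) 0)]

theorem commute_reflect_qwStep {U : Matrix (Fin 2) (Fin 2) ℂ} {ω : ℂ} (hω : ω ≠ 0)
    (h₀ : ω * U 1 1 = U 0 0) (h₁ : ω * U 1 0 = -U 0 1) :
    Function.Commute (reflect ω) (qwStep U) := by
  intro ψ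
  funext x c
  fin_cases c <;>
    simp only [reflect, qwStep, Fin.isValue, one_ne_zero, ↓reduceIte, Matrix.mulVec, dotProduct,
      Fin.sum_univ_two, Fin.zero_eta, Fin.mk_one, Matrix.cons_val_zero, Matrix.cons_val_one,
      Matrix.cons_val_fin_one, neg_sub, neg_add', neg_add_eq_sub, mul_neg]
  · have hx : ω ^ x = ω ^ (x - 1) * ω := by rw [← zpow_add_one₀ hω, sub_add_cancel]
    rw [hx]
    linear_combination ω ^ (x - 1) * ψ (1 - x) 1 * h₀ + ω ^ (x - 1) * ψ (1 - x) 0 * h₁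
  · rw [zpow_add_one₀ hω]
    linear_combination ω ^ x * ψ (-x - 1) 0 * h₀ - ω ^ x * ψ (-x - 1) 1 * h₁

theorem commute_smul_qwStep (U : Matrix (Fin 2) (Fin 2) ℂ) (a : ℂ) :
    Function.Commute (a • ·) (qwStep U) := by
  intro ψ
  funext x c
  by_cases hc : c = 0 <;> simp [qwStep, hc, Matrix.mulVec_smul]

theorem prob_reflect {ω : ℂ} (hω : ‖ω‖ = 1) (ψ : ℤ → Fin 2 → ℂ) (x : ℤ) :
    prob (reflect ω ψ) x = prob ψ (-x) := by
  simp [prob, reflect, Fin.sum_univ_two, norm_zpow, hω, add_comm]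

theorem prob_smul (a : ℂ) (ψ : ℤ → Fin 2 → ℂ) (x : ℤ) :
    prob (a • ψ) x = ‖a‖ ^ 2 * prob ψ x := by
  simp only [prob, Pi.smul_apply, smul_eq_mul, norm_mul, mul_pow, Finset.mul_sum]

theorem PR_smul (a : ℂ) (ψ : ℤ → Fin 2 → ℂ) : PR (a • ψ) = ‖a‖ ^ 2 * PR ψ := by
  simp only [PR, prob_smul, tsum_mul_left]

theorem PR_eq_PL_of_prob_eq {φ ψ : ℤ → Fin 2 → ℂ} (h : ∀ x, prob φ x = prob ψ (-x)) :
    PR φ = PL ψ := by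
  let e : {x : ℤ // 0 < x} ≃ {x : ℤ // x < 0} :=
    (Equiv.neg ℤ).subtypeEquiv fun _ => neg_lt_zero.symm
  rw [PL, ← e.tsum_eq]
  exact tsum_congr fun x => h x

theorem exp_mul_USU_one_one (α β γ : ℝ) :
    exp (2 * α * I) * USU α β γ 1 1 = USU α β γ 0 0 := by
  simp only [USU, Matrix.of_apply, Matrix.cons_val', Matrix.cons_val_zero, Matrix.cons_val_one,
    Matrix.empty_val', Matrix.cons_val_fin_one]
  rw [← mul_assoc, ← exp_add]
  ring_nf

theorem exp_mul_USU_one_zero {α γ : ℝ} (h : ∃ k : ℤ, α + γ = k * Real.pi) (β : ℝ) :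
    exp (2 * α * I) * USU α β γ 1 0 = -USU α β γ 0 1 := by
  obtain ⟨k, hk⟩ := h
  obtain rfl : γ = k * Real.pi - α := by linarith
  have hexp : exp (2 * α * I) * exp ((k * Real.pi - α) * I) = exp (-(k * Real.pi - α) * I) := by
    rw [← exp_add, show 2 * (α : ℂ) * I + (k * Real.pi - α) * I
      = -(k * Real.pi - α) * I + k * (2 * Real.pi * I) by ring, exp_add,
      exp_int_mul_two_pi_mul_I, mul_one]
  simp only [USU, Matrix.of_apply, Matrix.cons_val', Matrix.cons_val_zero, Matrix.cons_val_one,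
    Matrix.empty_val', Matrix.cons_val_fin_one]
  push_cast
  rw [← mul_assoc, hexp]
  ring

theorem reflect_ψinit {ω : ℂ} : reflect ω ψinit = -I • ψinit := by
  funext x c
  rcases eq_or_ne x 0 with rfl | hx
  · fin_cases c <;> simp [reflect, ψinit, div_eq_mul_inv, ← mul_assoc]
  · fin_cases c <;> simp [reflect, ψinit, hx]

theorem PR_sub_PL_zero_of_sin_zero (α β γ : ℝ) (h : ∃ k : ℤ, α + γ = k * Real.pi)
    (t : ℕ) :
    PR ((qwStep (USU α β γ))^[t] ψinit) - PL ((qwStep (USU α β γ))^[t] ψinit) = 0 := by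
  set W := qwStep (USU α β γ)
  set ω := exp (2 * α * I)
  have hω : ‖ω‖ = 1 := by simpa using norm_exp_ofReal_mul_I (2 * α)
  have hreflect : Function.Commute (reflect ω) W^[t] :=
    (commute_reflect_qwStep (exp_ne_zero _) (exp_mul_USU_one_one α β γ)
      (exp_mul_USU_one_zero h β)).iterate_right t
  have hsmul : Function.Commute (-I • ·) W^[t] := (commute_smul_qwStep _ (-I)).iterate_right t
  suffices PL (W^[t] ψinit) = PR (W^[t] ψinit) by rw [this, sub_self]
  calc PL (W^[t] ψinit)
      = PR (reflect ω (W^[t] ψinit)) := (PR_eq_PL_of_prob_eq (prob_reflect hω _)).symm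
    _ = PR (W^[t] (-I • ψinit)) := by rw [hreflect.eq, reflect_ψinit]
    _ = PR (W^[t] ψinit) := by rw [← hsmul.eq, PR_smul]; simp
end

section
/- If two coins U_A = U^S(α_A,β,γ_A) and U_B = U^S(α_B,β,γ_B) satisfy α_A + γ_A = α_B + γ_B, then for the initial state (1/√2)|0⟩(|↓⟩ + i|↑⟩) the quantity P_R − P_L after t steps is the same for the walk with coin U_A as for the walk with coin U_B. -/
open Complex

/-!
Multiplying the amplitude at site `x` by `e^{iax}` turns one step of the walk with coin `U` into
one step with coin `diag(e^{-ia}, e^{ia}) U`, because the shift brings the `|↑⟩` component from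
`x - 1` and the `|↓⟩` component from `x + 1`. This row rescaling sends `U^S(α,β,γ)` to
`U^S(α - a, β, γ + a)`, so coins with the same `α + γ` are related by the gauge with
`a = α_B - α_A`. The gauge preserves every site probability and fixes the initial state, which sits
at the origin; hence both walks have the same position distribution at all times.
-/

noncomputable def qwGauge (a : ℝ) (ψ : ℤ → Fin 2 → ℂ) : ℤ → Fin 2 → ℂ :=
  fun x => exp (↑(a * x) * I) • ψ x

noncomputable def coinPhase (a : ℝ) : Matrix (Fin 2) (Fin 2) ℂ :=
  Matrix.diagonal ![exp (↑(-a) * I), exp (↑a * I)]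

theorem exp_ofReal_mul_int_add_mul_I (a : ℝ) (x y : ℤ) :
    exp (↑(a * ↑(x + y)) * I) = exp (↑(a * y) * I) * exp (↑(a * x) * I) := by
  rw [← exp_add]; push_cast; ring_nf

theorem qwStep_qwGauge (U : Matrix (Fin 2) (Fin 2) ℂ) (a : ℝ) (ψ : ℤ → Fin 2 → ℂ) :
    qwStep U (qwGauge a ψ) = qwGauge a (qwStep (coinPhase a * U) ψ) := by
  funext x c
  simp only [qwStep, qwGauge, Matrix.mulVec_smul, ← Matrix.mulVec_mulVec, coinPhase,
    Matrix.mulVec_diagonal, sub_eq_add_neg, Pi.smul_apply, smul_eq_mul,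
    exp_ofReal_mul_int_add_mul_I]
  fin_cases c <;>
    simp only [Fin.zero_eta, Fin.mk_one, Fin.isValue, one_ne_zero, ↓reduceIte, Int.cast_neg,
      Int.cast_one, mul_neg, mul_one, Matrix.cons_val_zero, Matrix.cons_val_one,
      Matrix.cons_val_fin_one] <;> ring

theorem coinPhase_mul_USU (a α β γ : ℝ) : coinPhase a * USU α β γ = USU (α - a) β (γ + a) := by
  ext i j
  fin_cases i <;> fin_cases j <;>
    simp only [coinPhase, USU, Matrix.diagonal_mul, Matrix.of_apply, Fin.zero_eta, Fin.mk_one,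
      Fin.isValue, Matrix.cons_val', Matrix.cons_val_zero, Matrix.cons_val_one,
      Matrix.cons_val_fin_one, mul_neg, ← mul_assoc, ← exp_add] <;> push_cast <;> ring_nf

theorem prob_qwGauge (a : ℝ) (ψ : ℤ → Fin 2 → ℂ) : prob (qwGauge a ψ) = prob ψ := by
  funext x
  simp only [prob, qwGauge, Pi.smul_apply, smul_eq_mul, norm_mul, norm_exp_ofReal_mul_I, one_mul]

theorem qwGauge_ψinit (a : ℝ) : qwGauge a ψinit = ψinit := by
  funext x
  by_cases hx : x = 0 <;> simp [qwGauge, ψinit, hx]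

theorem iterate_qwStep_qwGauge (U : Matrix (Fin 2) (Fin 2) ℂ) (a : ℝ) (t : ℕ)
    (ψ : ℤ → Fin 2 → ℂ) :
    (qwStep U)^[t] (qwGauge a ψ) = qwGauge a ((qwStep (coinPhase a * U))^[t] ψ) :=
  (Function.Semiconj.iterate_right (fun ψ => (qwStep_qwGauge U a ψ).symm) t ψ).symm

theorem PR_sub_PL_depends_only_on_sum (β αA γA αB γB : ℝ) (h : αA + γA = αB + γB)
    (t : ℕ) :
    PR ((qwStep (USU αA β γA))^[t] ψinit) - PL ((qwStep (USU αA β γA))^[t] ψinit) =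
    PR ((qwStep (USU αB β γB))^[t] ψinit) - PL ((qwStep (USU αB β γB))^[t] ψinit) := by
  have hcoin : coinPhase (αB - αA) * USU αB β γB = USU αA β γA := by
    rw [coinPhase_mul_USU]; congr 1 <;> linarith
  conv_rhs => rw [← qwGauge_ψinit (αB - αA), iterate_qwStep_qwGauge, hcoin]
  simp only [PR, PL, prob_qwGauge]
end
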